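/- Let f be a ReLU network as defined and ζ' ∈ {0,1}^N. An input x ∈ ℝ^{n₀} induces activation pattern ζ' (i.e., ζ(x) = ζ') if and only if C̄^{(L-1)} x + d̄^{(L-1)} lies in the orthant O(ζ') = { v ∈ ℝ^N : 𝟙(v) = ζ' }. -/

import Mathlib

open Matrix MeasureTheory ProbabilityTheory

namespace ReluPaper

variable {n : ℕ → ℕ}

/-- Hidden representations of the ReLU network: `hid W b x ℓ` is the paper's
`h_{ℓ+1}(x)`, so that for a network with `L = M + 1` layers the output is
`f(x) = h_L(x) = hid W b x M`. -/
noncomputable def hid (W : ∀ ℓ : ℕ, Matrix (Fin (n (ℓ + 1))) (Fin (n ℓ)) ℝ)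
    (b : ∀ ℓ : ℕ, Fin (n (ℓ + 1)) → ℝ) (x : Fin (n 0) → ℝ) :
    ∀ ℓ : ℕ, Fin (n (ℓ + 1)) → ℝ
  | 0 => W 0 *ᵥ x + b 0
  | ℓ + 1 => W (ℓ + 1) *ᵥ (fun i => max 0 (hid W b x ℓ i)) + b (ℓ + 1)

/-- The matrices `C_ℓ` of the paper (0-indexed: `Cmat W z ℓ` is the paper's `C_{ℓ+1}`),
built from an activation pattern `z` via `C₁ = W₁`, `C_ℓ = W_ℓ diag(z_{ℓ-1}) C_{ℓ-1}`. -/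
noncomputable def Cmat (W : ∀ ℓ : ℕ, Matrix (Fin (n (ℓ + 1))) (Fin (n ℓ)) ℝ)
    (z : ∀ ℓ : ℕ, Fin (n (ℓ + 1)) → ℝ) :
    ∀ ℓ : ℕ, Matrix (Fin (n (ℓ + 1))) (Fin (n 0)) ℝ
  | 0 => W 0
  | ℓ + 1 => W (ℓ + 1) * Matrix.diagonal (z ℓ) * Cmat W z ℓ

/-- The vectors `d_ℓ` of the paper (0-indexed: `dvec W b z ℓ` is the paper's `d_{ℓ+1}`),
via `d₁ = b₁`, `d_ℓ = W_ℓ diag(z_{ℓ-1}) d_{ℓ-1} + b_ℓ`. -/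
noncomputable def dvec (W : ∀ ℓ : ℕ, Matrix (Fin (n (ℓ + 1))) (Fin (n ℓ)) ℝ)
    (b : ∀ ℓ : ℕ, Fin (n (ℓ + 1)) → ℝ) (z : ∀ ℓ : ℕ, Fin (n (ℓ + 1)) → ℝ) :
    ∀ ℓ : ℕ, Fin (n (ℓ + 1)) → ℝ
  | 0 => b 0
  | ℓ + 1 => W (ℓ + 1) *ᵥ (Matrix.diagonal (z ℓ) *ᵥ dvec W b z ℓ) + b (ℓ + 1)

/-- `x` induces activation pattern `z`, i.e. `𝟙(h_ℓ) = z_ℓ` for every hidden layer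
`ℓ = 1, …, L - 1` of a network with `L = M + 1` layers. -/
def inducesPattern (M : ℕ) (W : ∀ ℓ : ℕ, Matrix (Fin (n (ℓ + 1))) (Fin (n ℓ)) ℝ)
    (b : ∀ ℓ : ℕ, Fin (n (ℓ + 1)) → ℝ) (x : Fin (n 0) → ℝ)
    (z : ∀ ℓ : ℕ, Fin (n (ℓ + 1)) → ℝ) : Prop :=
  ∀ ℓ < M, ∀ i, (if 0 < hid W b x ℓ i then (1 : ℝ) else 0) = z ℓ i

/-- Index set for the stacked vector `[h₁ᵀ, …, h_{L-1}ᵀ]ᵀ` (with `L = M + 1`):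
a hidden layer index together with a neuron index in that layer. -/
abbrev PatIdx (M : ℕ) (n : ℕ → ℕ) := (ℓ : Fin M) × Fin (n (ℓ.1 + 1))

/-! If the first `ℓ` hidden layers have pattern `z`, each of their ReLUs acts as multiplication
by the 0/1 mask `z`, so `h_{ℓ+1}(x) = C_{ℓ+1} x + d_{ℓ+1}`. Hence, by induction on the number of
layers, the true pattern and the pattern of the stacked affine map agree whenever either one is
`z`. -/

lemma max_zero_eq_ite_mul (t : ℝ) : max 0 t = (if 0 < t then 1 else 0) * t := by
  split_ifs with ht
  · rw [one_mul, max_eq_right ht.le]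
  · rw [zero_mul, max_eq_left (not_lt.mp ht)]

lemma hid_eq_Cmat_mulVec_add_dvec {ℓ : ℕ} (W : ∀ ℓ : ℕ, Matrix (Fin (n (ℓ + 1))) (Fin (n ℓ)) ℝ)
    (b : ∀ ℓ : ℕ, Fin (n (ℓ + 1)) → ℝ) (x : Fin (n 0) → ℝ)
    (z : ∀ ℓ : ℕ, Fin (n (ℓ + 1)) → ℝ) (h : inducesPattern ℓ W b x z) :
    hid W b x ℓ = Cmat W z ℓ *ᵥ x + dvec W b z ℓ := by
  induction ℓ with
  | zero => rfl
  | succ ℓ ih =>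
    have relu_eq_mask : (fun i => max 0 (hid W b x ℓ i)) = diagonal (z ℓ) *ᵥ hid W b x ℓ := by
      funext i
      rw [mulVec_diagonal, max_zero_eq_ite_mul, h ℓ ℓ.lt_succ_self i]
    show W (ℓ + 1) *ᵥ (fun i => max 0 (hid W b x ℓ i)) + b (ℓ + 1) = _
    rw [relu_eq_mask, ih fun ℓ' hℓ' => h ℓ' (hℓ'.trans ℓ.lt_succ_self)]
    simp only [Cmat, dvec, mulVec_add, ← mulVec_mulVec, add_assoc]

lemma inducesPattern_iff_affine_pattern (k : ℕ)
    (W : ∀ ℓ : ℕ, Matrix (Fin (n (ℓ + 1))) (Fin (n ℓ)) ℝ)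
    (b : ∀ ℓ : ℕ, Fin (n (ℓ + 1)) → ℝ) (x : Fin (n 0) → ℝ)
    (z : ∀ ℓ : ℕ, Fin (n (ℓ + 1)) → ℝ) :
    inducesPattern k W b x z ↔ ∀ ℓ < k, ∀ i,
      (if 0 < (Cmat W z ℓ *ᵥ x + dvec W b z ℓ) i then (1 : ℝ) else 0) = z ℓ i := by
  induction k with
  | zero => simp [inducesPattern]
  | succ k ih =>
    simp only [inducesPattern, Nat.forall_lt_succ_right] at ih ⊢
    constructor
    · rintro ⟨hprefix, hk⟩
      rw [← hid_eq_Cmat_mulVec_add_dvec W b x z hprefix]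
      exact ⟨ih.mp hprefix, hk⟩
    · rintro ⟨hprefix, hk⟩
      have hprefix' := ih.mpr hprefix
      rw [← hid_eq_Cmat_mulVec_add_dvec W b x z hprefix'] at hk
      exact ⟨hprefix', hk⟩

theorem statement2_general
    (n : ℕ → ℕ) (M : ℕ)  -- the network has `L = M + 1` layers
    (W : ∀ ℓ : ℕ, Matrix (Fin (n (ℓ + 1))) (Fin (n ℓ)) ℝ)
    (b : ∀ ℓ : ℕ, Fin (n (ℓ + 1)) → ℝ)
    (z : ∀ ℓ : ℕ, Fin (n (ℓ + 1)) → ℝ)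
    (x : Fin (n 0) → ℝ) :
    inducesPattern M W b x z ↔
      (fun p : PatIdx M n => (Cmat W z (p.1 : ℕ) *ᵥ x + dvec W b z (p.1 : ℕ)) p.2) ∈
        {v : PatIdx M n → ℝ |
          ∀ p : PatIdx M n, (if 0 < v p then (1 : ℝ) else 0) = z (p.1 : ℕ) p.2} := by
  rw [inducesPattern_iff_affine_pattern]
  exact ⟨fun h p => h p.1 p.1.2 p.2, fun h ℓ hℓ i => h ⟨⟨ℓ, hℓ⟩, i⟩⟩

/-- `x` induces activation pattern `ζ'` iff the stacked vector
`C̄^{(L-1)} x + d̄^{(L-1)}` lies in the orthant `O(ζ') = {v : 𝟙(v) = ζ'}`. -/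
theorem statement2
    (n : ℕ → ℕ) (M : ℕ)  -- the network has `L = M + 1` layers
    (W : ∀ ℓ : ℕ, Matrix (Fin (n (ℓ + 1))) (Fin (n ℓ)) ℝ)
    (b : ∀ ℓ : ℕ, Fin (n (ℓ + 1)) → ℝ)
    (z : ∀ ℓ : ℕ, Fin (n (ℓ + 1)) → ℝ)
    (hz : ∀ ℓ < M, ∀ i, z ℓ i = 0 ∨ z ℓ i = 1)  -- `ζ' ∈ {0,1}^N`
    (x : Fin (n 0) → ℝ) :
    inducesPattern M W b x z ↔
      (fun p : PatIdx M n => (Cmat W z (p.1 : ℕ) *ᵥ x + dvec W b z (p.1 : ℕ)) p.2) ∈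
        {v : PatIdx M n → ℝ |
          ∀ p : PatIdx M n, (if 0 < v p then (1 : ℝ) else 0) = z (p.1 : ℕ) p.2} :=
  statement2_general n M W b z x

end ReluPaper
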